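/- Let H be a Hilbert space and let D₁, D₂ be self-adjoint operators that are each of the form Dᵢ = dᵢ + dᵢ* for closedions dᵢ with dᵢ² = 0 on a common domain core. Suppose D₁ has discrete spectrum and that y = d₂ − d₁ extends to a bounded operator with operator norm ‖y‖. Then for every j, the j-th min-max eigenvalues of D₁² and D₂² satisfy |λⱼ(D₁²)^{1/2} − λⱼ(D₂²)^{1/2}| ≤ (2 + √2)·‖y‖. -/
import Mathlib


open scoped RealInnerProductSpace

/-- The `j`-th min-max value of `x ↦ ‖D x‖` over a form core `Dom`; for a self-adjoint
operator `D` with discrete spectrum this is `λⱼ(D²)^{1/2}`. -/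
noncomputable def minmaxSqrt {H : Type*} [NormedAddCommGroup H] [InnerProductSpace ℝ H]
    (D : H →ₗ[ℝ] H) (Dom : Submodule ℝ H) (j : ℕ) : ℝ :=
  sInf {c : ℝ | ∃ V : Submodule ℝ H, V ≤ Dom ∧ Module.finrank ℝ V = j ∧
    ∀ x ∈ V, ‖x‖ = 1 → ‖D x‖ ≤ c}

lemma minmaxSqrt_mem_shift {H : Type*} [NormedAddCommGroup H] [InnerProductSpace ℝ H]
    (Dom : Submodule ℝ H) (D D' : H →ₗ[ℝ] H) (k : ℝ)
    (h : ∀ x : H, ‖D' x - D x‖ ≤ k * ‖x‖) {j : ℕ} {c' : ℝ}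
    (hc' : c' ∈ {c : ℝ | ∃ V : Submodule ℝ H, V ≤ Dom ∧ Module.finrank ℝ V = j ∧
      ∀ x ∈ V, ‖x‖ = 1 → ‖D x‖ ≤ c}) :
    c' + k ∈ {c : ℝ | ∃ V : Submodule ℝ H, V ≤ Dom ∧ Module.finrank ℝ V = j ∧
      ∀ x ∈ V, ‖x‖ = 1 → ‖D' x‖ ≤ c} := by
  obtain ⟨V, hV, hrank, hb⟩ := hc'
  refine ⟨V, hV, hrank, fun x hx hn => ?_⟩
  have h1 : ‖D' x‖ ≤ ‖D x‖ + ‖D' x - D x‖ := by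
    have := norm_add_le (D x) (D' x - D x)
    simpa using this
  have h2 := h x
  rw [hn, mul_one] at h2
  linarith [hb x hx hn]

lemma minmaxSqrt_le_shift {H : Type*} [NormedAddCommGroup H] [InnerProductSpace ℝ H]
    (Dom : Submodule ℝ H) (D D' : H →ₗ[ℝ] H) (k : ℝ) (hk : 0 ≤ k)
    (h : ∀ x : H, ‖D' x - D x‖ ≤ k * ‖x‖)
    (h' : ∀ x : H, ‖D x - D' x‖ ≤ k * ‖x‖) (j : ℕ) :
    minmaxSqrt D' Dom j ≤ minmaxSqrt D Dom j + k := by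
  set S : Set ℝ := {c : ℝ | ∃ V : Submodule ℝ H, V ≤ Dom ∧ Module.finrank ℝ V = j ∧
      ∀ x ∈ V, ‖x‖ = 1 → ‖D x‖ ≤ c} with hS
  set S' : Set ℝ := {c : ℝ | ∃ V : Submodule ℝ H, V ≤ Dom ∧ Module.finrank ℝ V = j ∧
      ∀ x ∈ V, ‖x‖ = 1 → ‖D' x‖ ≤ c} with hS'
  show sInf S' ≤ sInf S + k
  rcases Nat.eq_zero_or_pos j with hj | hj
  · subst hj
    have huniv : ∀ (A : H →ₗ[ℝ] H),
        {c : ℝ | ∃ V : Submodule ℝ H, V ≤ Dom ∧ Module.finrank ℝ V = 0 ∧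
          ∀ x ∈ V, ‖x‖ = 1 → ‖A x‖ ≤ c} = Set.univ := by
      intro A
      ext c
      simp only [Set.mem_univ, iff_true, Set.mem_setOf_eq]
      refine ⟨⊥, bot_le, finrank_bot ℝ H, fun x hx hn => ?_⟩
      rw [Submodule.mem_bot] at hx
      simp [hx] at hn
    rw [hS, hS', huniv D, huniv D']
    linarith
  · by_cases hne : S.Nonempty
    · have hne' : S'.Nonempty := by
        obtain ⟨c', hc'⟩ := hne
        exact ⟨c' + k, minmaxSqrt_mem_shift Dom D D' k h hc'⟩
      have hbdd' : BddBelow S' := by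
        refine ⟨0, fun c'' hc'' => ?_⟩
        obtain ⟨V, hV, hrank, hb⟩ := hc''
        have hVne : V ≠ ⊥ := by
          intro hbot
          rw [hbot, finrank_bot ℝ H] at hrank
          omega
        obtain ⟨x, hxV, hx0⟩ := Submodule.ne_bot_iff V |>.mp hVne
        have hnx : ‖x‖ ≠ 0 := norm_ne_zero_iff.mpr hx0
        have hu : ‖x‖⁻¹ • x ∈ V := V.smul_mem _ hxV
        have hun : ‖‖x‖⁻¹ • x‖ = 1 := by
          rw [norm_smul, norm_inv, norm_norm, inv_mul_cancel₀ hnx]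
        exact le_trans (norm_nonneg _) (hb _ hu hun)
      have : sInf S' - k ≤ sInf S := by
        apply le_csInf hne
        intro c' hc'
        have : sInf S' ≤ c' + k := csInf_le hbdd' (minmaxSqrt_mem_shift Dom D D' k h hc')
        linarith
      linarith
    · have hne' : ¬ S'.Nonempty := by
        intro ⟨c'', hc''⟩
        exact hne ⟨c'' + k, minmaxSqrt_mem_shift Dom D' D k h' hc''⟩
      rw [Set.not_nonempty_iff_eq_empty] at hne hne'
      rw [hne, hne', Real.sInf_empty]
      linarith

/-- Let `Dᵢ = dᵢ + dᵢ*` (`i = 1,2`) be symmetric operators on a common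
dense domain core, with `dᵢ² = 0`, and suppose `y = d₂ − d₁` is bounded with norm at
most `c` (so its formal adjoint `d₂* − d₁*` is bounded with the same norm).  Then the
square roots of the `j`-th min-max eigenvalues of `D₁²` and `D₂²` differ by at most
`(2 + √2)·c`. -/
theorem stmt_4 {H : Type*} [NormedAddCommGroup H] [InnerProductSpace ℝ H] [CompleteSpace H]
    (Dom : Submodule ℝ H) (hdense : Dense (Dom : Set H))
    (d₁ d₂ a₁ a₂ : H →ₗ[ℝ] H)
    (hflat₁ : ∀ x ∈ Dom, d₁ x ∈ Dom ∧ d₁ (d₁ x) = 0)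
    (hflat₂ : ∀ x ∈ Dom, d₂ x ∈ Dom ∧ d₂ (d₂ x) = 0)
    (hadj₁ : ∀ x ∈ Dom, ∀ y ∈ Dom, ⟪a₁ x, y⟫ = ⟪x, d₁ y⟫)
    (hadj₂ : ∀ x ∈ Dom, ∀ y ∈ Dom, ⟪a₂ x, y⟫ = ⟪x, d₂ y⟫)
    (c : ℝ) (hc : 0 ≤ c)
    (hy : ∀ x : H, ‖d₂ x - d₁ x‖ ≤ c * ‖x‖)
    (hystar : ∀ x : H, ‖a₂ x - a₁ x‖ ≤ c * ‖x‖) (j : ℕ) :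
    |minmaxSqrt (d₁ + a₁) Dom j - minmaxSqrt (d₂ + a₂) Dom j| ≤ (2 + Real.sqrt 2) * c := by
  have hdiff : ∀ x : H, ‖(d₂ + a₂) x - (d₁ + a₁) x‖ ≤ 2 * c * ‖x‖ := by
    intro x
    have : (d₂ + a₂) x - (d₁ + a₁) x = (d₂ x - d₁ x) + (a₂ x - a₁ x) := by
      simp [LinearMap.add_apply]; abel
    rw [this]
    calc ‖(d₂ x - d₁ x) + (a₂ x - a₁ x)‖ ≤ ‖d₂ x - d₁ x‖ + ‖a₂ x - a₁ x‖ := norm_add_le _ _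
      _ ≤ c * ‖x‖ + c * ‖x‖ := add_le_add (hy x) (hystar x)
      _ = 2 * c * ‖x‖ := by ring
  have hdiff' : ∀ x : H, ‖(d₁ + a₁) x - (d₂ + a₂) x‖ ≤ 2 * c * ‖x‖ := by
    intro x
    rw [← norm_neg]
    simpa using hdiff x
  have h2c : (0:ℝ) ≤ 2 * c := by linarith
  have h1 := minmaxSqrt_le_shift Dom (d₁ + a₁) (d₂ + a₂) (2 * c) h2c hdiff hdiff' j
  have h2 := minmaxSqrt_le_shift Dom (d₂ + a₂) (d₁ + a₁) (2 * c) h2c hdiff' hdiff j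
  have hsqrt : (0:ℝ) ≤ Real.sqrt 2 := Real.sqrt_nonneg 2
  rw [abs_sub_le_iff]
  constructor <;> nlinarith
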